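/- Let W and W₁, W₂, … be graphons on a common probability space S with W {0,1}-valued almost everywhere. Then ‖W_n − W‖_□ → 0 if and only if ‖W_n − W‖_{L¹(S²)} → 0. -/

import Mathlib

/-!
For a `{0,1}`-valued `W`, put `V = W_n - W` and `U = {W = 1}`. Since `0 ≤ W_n ≤ 1`, we have
`|V| = V - 2 · 1_U · V` almost everywhere, so `‖V‖₁ = ∫ V - 2 ∫_U V`. The first integral is
bounded by the cut norm (take `A = B = S`). For the second, approximate `U` in measure by a set
`T` of the algebra generated by measurable rectangles: the indicator of `T` is a finite linear
combination of indicators of rectangles, hence `|∫_T V| ≤ C ‖V‖_□` with `C` depending only on `T`,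
and `|∫_U V - ∫_T V| ≤ μ²(U ∆ T)`. The converse is `‖V‖_□ ≤ ‖V‖₁`.
-/

open MeasureTheory Filter

noncomputable def cutNorm1 {S : Type*} [MeasurableSpace S] (μ : Measure S)
    (W : S → S → ℝ) : ℝ :=
  sSup {r : ℝ | ∃ A B : Set S, MeasurableSet A ∧ MeasurableSet B ∧
    r = |∫ p in A ×ˢ B, W p.1 p.2 ∂(μ.prod μ)|}

open Set Topology
open scoped symmDiff

section Rectangles

variable (α β : Type*) [MeasurableSpace α] [MeasurableSpace β]

def measurableRectangles : Set (Set (α × β)) :=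
  image2 (· ×ˢ ·) {A : Set α | MeasurableSet A} {B : Set β | MeasurableSet B}

def rectangleSpan : Submodule ℝ (α × β → ℝ) :=
  Submodule.span ℝ ((fun T => T.indicator 1) '' measurableRectangles α β)

variable {α β}

lemma inter_mem_measurableRectangles {T T' : Set (α × β)} (hT : T ∈ measurableRectangles α β)
    (hT' : T' ∈ measurableRectangles α β) : T ∩ T' ∈ measurableRectangles α β := by
  obtain ⟨A, hA, B, hB, rfl⟩ := hT
  obtain ⟨A', hA', B', hB', rfl⟩ := hT'
  exact ⟨A ∩ A', hA.inter hA', B ∩ B', hB.inter hB', prod_inter_prod.symm⟩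

lemma indicator_one_mem_rectangleSpan {T : Set (α × β)} (hT : T ∈ measurableRectangles α β) :
    T.indicator 1 ∈ rectangleSpan α β :=
  Submodule.subset_span (mem_image_of_mem _ hT)

lemma one_mem_rectangleSpan : (1 : α × β → ℝ) ∈ rectangleSpan α β := by
  simpa [univ_prod_univ] using indicator_one_mem_rectangleSpan
    (mem_image2_of_mem (MeasurableSet.univ (α := α)) (MeasurableSet.univ (α := β)))

lemma mul_mem_rectangleSpan {f g : α × β → ℝ} (hf : f ∈ rectangleSpan α β)
    (hg : g ∈ rectangleSpan α β) : f * g ∈ rectangleSpan α β := by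
  have hclosed : rectangleSpan α β * rectangleSpan α β ≤ rectangleSpan α β := by
    rw [rectangleSpan, Submodule.span_mul_span]
    refine Submodule.span_mono ?_
    rintro _ ⟨_, ⟨T, hT, rfl⟩, _, ⟨T', hT', rfl⟩, rfl⟩
    exact ⟨T ∩ T', inter_mem_measurableRectangles hT hT', inter_indicator_one⟩
  exact hclosed (Submodule.mul_mem_mul hf hg)

lemma indicator_one_mem_rectangleSpan_of_mem_generateSetAlgebra {T : Set (α × β)}
    (hT : T ∈ generateSetAlgebra (measurableRectangles α β)) :
    T.indicator 1 ∈ rectangleSpan α β := by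
  induction hT with
  | base T hT => exact indicator_one_mem_rectangleSpan hT
  | empty =>
    rw [indicator_empty]
    exact zero_mem _
  | compl T _ hT =>
    rw [indicator_compl]
    exact Submodule.sub_mem _ one_mem_rectangleSpan hT
  | union T T' _ _ hT hT' =>
    rw [eq_sub_of_add_eq (indicator_union_add_inter (1 : α × β → ℝ) T T'), inter_indicator_one]
    exact Submodule.sub_mem _ (Submodule.add_mem _ hT hT') (mul_mem_rectangleSpan hT hT')

lemma exists_mem_generateSetAlgebra_measureReal_symmDiff_lt (ν : Measure (α × β))
    [IsFiniteMeasure ν] {U : Set (α × β)} (hU : MeasurableSet U) {ε : ℝ} (hε : 0 < ε) :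
    ∃ T ∈ generateSetAlgebra (measurableRectangles α β), MeasurableSet T ∧ ν.real (U ∆ T) < ε := by
  have hgen : (inferInstance : MeasurableSpace (α × β)) =
      MeasurableSpace.generateFrom (generateSetAlgebra (measurableRectangles α β)) := by
    rw [generateFrom_generateSetAlgebra_eq, measurableRectangles, generateFrom_prod]
  have hdense := Measure.MeasureDense.of_generateFrom_isSetAlgebra_finite ν
    isSetAlgebra_generateSetAlgebra hgen
  obtain ⟨T, hT, hUT⟩ := hdense.approx U hU (measure_ne_top ν U) ε hε
  exact ⟨T, hT, hdense.measurable T hT, ENNReal.toReal_lt_of_lt_ofReal hUT⟩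

end Rectangles

lemma indicator_one_mul_eq_indicator {ι M₀ : Type*} [MulZeroOneClass M₀] (s : Set ι)
    (f : ι → M₀) : (fun i => s.indicator 1 i * f i) = s.indicator f := by
  ext i
  by_cases hi : i ∈ s <;> simp [hi]

section SetIntegral

variable {α : Type*} [MeasurableSpace α] {ν : Measure α} {f : α → ℝ} {s t : Set α}

lemma abs_setIntegral_le_integral_abs (hf : Integrable f ν) (s : Set α) :
    |∫ x in s, f x ∂ν| ≤ ∫ x, |f x| ∂ν :=
  (abs_integral_le_integral_abs).trans
    (setIntegral_le_integral hf.abs (Eventually.of_forall fun _ => abs_nonneg _))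

lemma abs_setIntegral_sub_setIntegral_le [IsFiniteMeasure ν] (hf : Integrable f ν) {C : ℝ}
    (hC : ∀ x, |f x| ≤ C) (hs : MeasurableSet s) (ht : MeasurableSet t) :
    |∫ x in s, f x ∂ν - ∫ x in t, f x ∂ν| ≤ C * ν.real (s ∆ t) := by
  have hdiff : ∀ {u : Set α}, |∫ x in u, f x ∂ν| ≤ C * ν.real u := fun {u} =>
    norm_setIntegral_le_of_norm_le_const (f := f) (measure_lt_top ν u) fun x _ => hC x
  have hs_split := integral_inter_add_sdiff (s := s) ht hf.integrableOn
  have ht_split := integral_inter_add_sdiff (s := t) hs hf.integrableOn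
  rw [inter_comm] at ht_split
  calc |∫ x in s, f x ∂ν - ∫ x in t, f x ∂ν|
      = |∫ x in s \ t, f x ∂ν - ∫ x in t \ s, f x ∂ν| := by
        rw [← hs_split, ← ht_split, add_sub_add_left_eq_sub]
    _ ≤ |∫ x in s \ t, f x ∂ν| + |∫ x in t \ s, f x ∂ν| := abs_sub _ _
    _ ≤ C * ν.real (s \ t) + C * ν.real (t \ s) := add_le_add hdiff hdiff
    _ = C * ν.real (s ∆ t) := by rw [measureReal_symmDiff_eq hs ht, mul_add]

end SetIntegral

section CutNorm

variable {S : Type*} [MeasurableSpace S] {μ : Measure S} {V : S → S → ℝ}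

lemma cutNorm1_nonneg (μ : Measure S) (V : S → S → ℝ) : 0 ≤ cutNorm1 μ V :=
  Real.sSup_nonneg fun _ ⟨_, _, _, _, hr⟩ => hr ▸ abs_nonneg _

lemma cutNorm1_le_integral_abs (hV : Integrable (fun p : S × S => V p.1 p.2) (μ.prod μ)) :
    cutNorm1 μ V ≤ ∫ p, |V p.1 p.2| ∂(μ.prod μ) :=
  csSup_le ⟨0, ∅, ∅, .empty, .empty, by simp⟩ fun _ ⟨_, _, _, _, hr⟩ =>
    hr ▸ abs_setIntegral_le_integral_abs hV _

lemma abs_setIntegral_prod_le_cutNorm1 (hV : Integrable (fun p : S × S => V p.1 p.2) (μ.prod μ))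
    {A B : Set S} (hA : MeasurableSet A) (hB : MeasurableSet B) :
    |∫ p in A ×ˢ B, V p.1 p.2 ∂(μ.prod μ)| ≤ cutNorm1 μ V :=
  le_csSup ⟨_, fun _ ⟨_, _, _, _, hr⟩ => hr ▸ abs_setIntegral_le_integral_abs hV _⟩
    ⟨A, B, hA, hB, rfl⟩

lemma exists_abs_integral_mul_le_cutNorm1 {F : S × S → ℝ} (hF : F ∈ rectangleSpan S S) :
    ∃ C, ∀ V : S → S → ℝ, Integrable (fun p : S × S => V p.1 p.2) (μ.prod μ) →
      Integrable (fun p => F p * V p.1 p.2) (μ.prod μ) ∧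
        |∫ p, F p * V p.1 p.2 ∂(μ.prod μ)| ≤ C * cutNorm1 μ V := by
  induction hF using Submodule.span_induction with
  | mem _ hF =>
    obtain ⟨_, ⟨A, hA, B, hB, rfl⟩, rfl⟩ := hF
    refine ⟨1, fun V hV => ?_⟩
    rw [indicator_one_mul_eq_indicator, integral_indicator (hA.prod hB), one_mul]
    exact ⟨hV.indicator (hA.prod hB), abs_setIntegral_prod_le_cutNorm1 hV hA hB⟩
  | zero => exact ⟨0, fun V _ => by simp⟩
  | add F G _ _ hF hG =>
    obtain ⟨C, hC⟩ := hF
    obtain ⟨D, hD⟩ := hG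
    refine ⟨C + D, fun V hV => ?_⟩
    obtain ⟨hFV, hFb⟩ := hC V hV
    obtain ⟨hGV, hGb⟩ := hD V hV
    simp only [Pi.add_apply, add_mul]
    refine ⟨hFV.add hGV, ?_⟩
    rw [integral_add hFV hGV]
    exact (abs_add_le _ _).trans (by linarith)
  | smul a F _ hF =>
    obtain ⟨C, hC⟩ := hF
    refine ⟨|a| * C, fun V hV => ?_⟩
    obtain ⟨hFV, hFb⟩ := hC V hV
    simp only [Pi.smul_apply, smul_eq_mul, mul_assoc]
    refine ⟨hFV.const_mul a, ?_⟩
    rw [integral_const_mul, abs_mul]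
    exact mul_le_mul_of_nonneg_left hFb (abs_nonneg a)

end CutNorm

lemma tendsto_setIntegral_of_tendsto_cutNorm1 {S : Type*} [MeasurableSpace S] {μ : Measure S}
    [IsFiniteMeasure μ] {V : ℕ → S → S → ℝ}
    (hVm : ∀ n, Measurable (fun p : S × S => V n p.1 p.2)) (hVb : ∀ n x y, |V n x y| ≤ 1)
    (hcut : Tendsto (fun n => cutNorm1 μ (V n)) atTop (𝓝 0))
    {U : Set (S × S)} (hU : MeasurableSet U) :
    Tendsto (fun n => ∫ p in U, V n p.1 p.2 ∂(μ.prod μ)) atTop (𝓝 0) := by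
  have hVi : ∀ n, Integrable (fun p : S × S => V n p.1 p.2) (μ.prod μ) := fun n =>
    .of_bound (hVm n).aestronglyMeasurable 1 (.of_forall fun p => hVb n p.1 p.2)
  rw [Metric.tendsto_nhds]
  intro ε hε
  obtain ⟨T, hTalg, hT, hUT⟩ := exists_mem_generateSetAlgebra_measureReal_symmDiff_lt
    (μ.prod μ) hU (half_pos hε)
  obtain ⟨C, hC⟩ := exists_abs_integral_mul_le_cutNorm1 (μ := μ)
    (indicator_one_mem_rectangleSpan_of_mem_generateSetAlgebra hTalg)
  have hsmall : ∀ᶠ n in atTop, |C * cutNorm1 μ (V n)| < ε / 2 := by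
    have hCcut := hcut.const_mul C
    rw [mul_zero] at hCcut
    simpa only [Real.dist_0_eq_abs] using Metric.tendsto_nhds.1 hCcut _ (half_pos hε)
  filter_upwards [hsmall] with n hn
  calc dist (∫ p in U, V n p.1 p.2 ∂(μ.prod μ)) 0
      ≤ |∫ p in U, V n p.1 p.2 ∂(μ.prod μ) - ∫ p in T, V n p.1 p.2 ∂(μ.prod μ)|
        + |∫ p in T, V n p.1 p.2 ∂(μ.prod μ)| := by
        rw [← Real.dist_eq, ← Real.dist_0_eq_abs]; exact dist_triangle _ _ _
    _ < ε / 2 + ε / 2 := by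
      refine add_lt_add ?_ ?_
      · exact (abs_setIntegral_sub_setIntegral_le (hVi n) (fun p => hVb n p.1 p.2) hU hT).trans_lt
          (by rwa [one_mul])
      · rw [← integral_indicator hT, ← indicator_one_mul_eq_indicator]
        exact (hC _ (hVi n)).2.trans_lt ((le_abs_self _).trans_lt hn)
    _ = ε := add_halves ε

lemma integral_abs_sub_eq_of_ae_eq_zero_or_one {α : Type*} [MeasurableSpace α] {ν : Measure α}
    {f g : α → ℝ} (hfg : Integrable (fun x => f x - g x) ν) (hg : Measurable g)
    (hf : ∀ᵐ x ∂ν, f x ∈ Icc 0 1) (hg01 : ∀ᵐ x ∂ν, g x = 0 ∨ g x = 1) :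
    ∫ x, |f x - g x| ∂ν =
      ∫ x, (f x - g x) ∂ν - 2 * ∫ x in {x | g x = 1}, (f x - g x) ∂ν := by
  have hU : MeasurableSet {x | g x = 1} := hg (measurableSet_singleton 1)
  have hpt : ∀ᵐ x ∂ν, |f x - g x| =
      (f x - g x) - 2 * {x | g x = 1}.indicator (fun x => f x - g x) x := by
    filter_upwards [hf, hg01] with x ⟨hf0, hf1⟩ hgx
    rcases hgx with hgx | hgx
    · simp [hgx, abs_of_nonneg hf0]
    · rw [indicator_of_mem (show x ∈ {x | g x = 1} from hgx), hgx,
        abs_of_nonpos (sub_nonpos.2 hf1)]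
      ring
  rw [integral_congr_ae hpt, integral_sub hfg ((hfg.indicator hU).const_mul 2),
    integral_const_mul, integral_indicator hU]

theorem cutNorm_tendsto_iff_L1_tendsto_general {S : Type*} [MeasurableSpace S]
    (μ : Measure S) [IsProbabilityMeasure μ]
    (W : S → S → ℝ) (Wseq : ℕ → S → S → ℝ)
    (hWm : Measurable (fun p : S × S => W p.1 p.2))
    (hWr : ∀ x y, W x y ∈ Set.Icc (0 : ℝ) 1)
    (hW01 : ∀ᵐ p ∂(μ.prod μ), W p.1 p.2 = 0 ∨ W p.1 p.2 = 1)
    (hWnm : ∀ n, Measurable (fun p : S × S => Wseq n p.1 p.2))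
    (hWnr : ∀ n x y, Wseq n x y ∈ Set.Icc (0 : ℝ) 1) :
    Tendsto (fun n => cutNorm1 μ (fun x y => Wseq n x y - W x y)) atTop (nhds 0) ↔
    Tendsto (fun n => ∫ p, |Wseq n p.1 p.2 - W p.1 p.2| ∂(μ.prod μ)) atTop (nhds 0) := by
  have hVm : ∀ n, Measurable (fun p : S × S => Wseq n p.1 p.2 - W p.1 p.2) :=
    fun n => (hWnm n).sub hWm
  have hVb : ∀ n x y, |Wseq n x y - W x y| ≤ 1 := fun n x y =>
    abs_sub_le_of_nonneg_of_le (hWnr n x y).1 (hWnr n x y).2 (hWr x y).1 (hWr x y).2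
  have hVi : ∀ n, Integrable (fun p : S × S => Wseq n p.1 p.2 - W p.1 p.2) (μ.prod μ) := fun n =>
    .of_bound (hVm n).aestronglyMeasurable 1 (.of_forall fun p => hVb n p.1 p.2)
  refine ⟨fun hcut => ?_, fun hL1 => squeeze_zero (fun n => cutNorm1_nonneg μ _)
    (fun n => cutNorm1_le_integral_abs (hVi n)) hL1⟩
  have hU : MeasurableSet {p : S × S | W p.1 p.2 = 1} := hWm (measurableSet_singleton 1)
  have hlim := (tendsto_setIntegral_of_tendsto_cutNorm1 hVm hVb hcut MeasurableSet.univ).sub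
    ((tendsto_setIntegral_of_tendsto_cutNorm1 hVm hVb hcut hU).const_mul 2)
  simp only [setIntegral_univ, mul_zero, sub_zero] at hlim
  refine hlim.congr fun n => ?_
  exact (integral_abs_sub_eq_of_ae_eq_zero_or_one (hVi n) hWm
    (.of_forall fun p => hWnr n p.1 p.2) hW01).symm

/-- For graphons `W_n` and a random-free graphon `W` on a common probability space,
convergence in the cut norm is equivalent to convergence in `L¹`. -/
theorem cutNorm_tendsto_iff_L1_tendsto {S : Type*} [MeasurableSpace S]
    (μ : Measure S) [IsProbabilityMeasure μ]
    (W : S → S → ℝ) (Wseq : ℕ → S → S → ℝ)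
    (hWm : Measurable (fun p : S × S => W p.1 p.2))
    (hWsym : ∀ x y, W x y = W y x)
    (hWr : ∀ x y, W x y ∈ Set.Icc (0 : ℝ) 1)
    (hW01 : ∀ᵐ p ∂(μ.prod μ), W p.1 p.2 = 0 ∨ W p.1 p.2 = 1)
    (hWnm : ∀ n, Measurable (fun p : S × S => Wseq n p.1 p.2))
    (hWnsym : ∀ n x y, Wseq n x y = Wseq n y x)
    (hWnr : ∀ n x y, Wseq n x y ∈ Set.Icc (0 : ℝ) 1) :
    Tendsto (fun n => cutNorm1 μ (fun x y => Wseq n x y - W x y)) atTop (nhds 0) ↔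
    Tendsto (fun n => ∫ p, |Wseq n p.1 p.2 - W p.1 p.2| ∂(μ.prod μ)) atTop (nhds 0) :=
  cutNorm_tendsto_iff_L1_tendsto_general μ W Wseq hWm hWr hW01 hWnm hWnr
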